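/- Let A be a finite set, θ : A → ℝ, π the softmax of θ, a₀ ∈ A, θ'(a₀) = θ(a₀) - log(1/π(a₀)), θ'(a) = θ(a) for a ≠ a₀, and π' the softmax of θ'. Then for every a ≠ a₀, π'(a) - π(a) = (π(a₀)·(1 - π(a₀)) / (π(a₀)² - π(a₀) + 1))·π(a). -/

import Mathlib

/-!
Write `S = ∑ exp θ` and `p = π a₀`. Lowering the logit of `a₀` by `log (1 / p)` multiplies its
weight `exp (θ a₀) = S p` by `p` and leaves the other weights alone, so the new partition function
is `S - S p + S p² = S (p² - p + 1)`. Hence `π' a = π a / (p² - p + 1)` for `a ≠ a₀`, and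
`1 / (p² - p + 1) - 1 = p (1 - p) / (p² - p + 1)`.
-/

open Finset

section Softmax

open Real

variable {A : Type*} [Fintype A]

theorem Finset.sum_univ_eq_sub_add_of_eq_of_ne {M : Type*} [AddCommGroup M] {f g : A → M} (a₀ : A)
    (h : ∀ a ≠ a₀, g a = f a) : ∑ a, g a = ∑ a, f a - f a₀ + g a₀ := by
  classical
  rw [← add_sum_erase _ f (mem_univ a₀), ← add_sum_erase _ g (mem_univ a₀),
    sum_congr rfl fun a ha => h a (ne_of_mem_erase ha)]
  abel

noncomputable def softmax (θ : A → ℝ) (a : A) : ℝ := exp (θ a) / ∑ a', exp (θ a')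

theorem sum_exp_pos (θ : A → ℝ) (a₀ : A) : 0 < ∑ a, exp (θ a) :=
  sum_pos (fun _ _ => exp_pos _) ⟨a₀, mem_univ _⟩

theorem softmax_pos (θ : A → ℝ) (a : A) : 0 < softmax θ a :=
  div_pos (exp_pos _) (sum_exp_pos θ a)

theorem sum_exp_of_add_logit {θ θ' : A → ℝ} {a₀ : A} {c : ℝ} (h₀ : θ' a₀ = θ a₀ + c)
    (h : ∀ a ≠ a₀, θ' a = θ a) :
    ∑ a, exp (θ' a) = (∑ a, exp (θ a)) * (1 - softmax θ a₀ + exp c * softmax θ a₀) := by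
  have hS := (sum_exp_pos θ a₀).ne'
  rw [sum_univ_eq_sub_add_of_eq_of_ne a₀ fun a ha => congrArg exp (h a ha), h₀, exp_add, softmax]
  field_simp

theorem softmax_of_add_logit {θ θ' : A → ℝ} {a₀ : A} {c : ℝ} (h₀ : θ' a₀ = θ a₀ + c)
    (h : ∀ a ≠ a₀, θ' a = θ a) {a : A} (ha : a ≠ a₀) :
    softmax θ' a = softmax θ a / (1 - softmax θ a₀ + exp c * softmax θ a₀) := by
  rw [softmax, sum_exp_of_add_logit h₀ h, h a ha, ← div_div]
  rfl

end Softmax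

theorem stmt_8 {A : Type*} [Fintype A] (θ θ' π π' : A → ℝ) (a₀ : A)
    (hπ : ∀ a, π a = Real.exp (θ a) / ∑ a', Real.exp (θ a'))
    (hθ'0 : θ' a₀ = θ a₀ - Real.log (1 / π a₀))
    (hθ' : ∀ a ≠ a₀, θ' a = θ a)
    (hπ' : ∀ a, π' a = Real.exp (θ' a) / ∑ a', Real.exp (θ' a')) :
    ∀ a ≠ a₀, π' a - π a = (π a₀ * (1 - π a₀) / ((π a₀) ^ 2 - π a₀ + 1)) * π a := by
  intro a ha
  obtain rfl : π = softmax θ := funext hπ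
  obtain rfl : π' = softmax θ' := funext hπ'
  have hp : 0 < softmax θ a₀ := softmax_pos θ a₀
  have h₀ : θ' a₀ = θ a₀ + Real.log (softmax θ a₀) := by
    rw [hθ'0, one_div, Real.log_inv, sub_neg_eq_add]
  rw [softmax_of_add_logit h₀ hθ' ha, Real.exp_log hp]
  generalize softmax θ a₀ = p
  have hD : p ^ 2 - p + 1 ≠ 0 := by nlinarith [sq_nonneg (p - 1)]
  rw [show 1 - p + p * p = p ^ 2 - p + 1 by ring, div_mul_eq_mul_div, eq_div_iff hD, sub_mul,
    div_mul_cancel₀ _ hD]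
  ring
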